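/- (Decomposing characterization) Under the hypotheses of the composing/decomposing theorem, for a tuple (x_1,…,x_m) ∈ S with rule {x_j : j ∈ W_i} →_p x_i, the rule is decomposing with respect to ≺_p if and only if i ∈ D; in the decomposing case, the controlling value is x_h for the index h ∈ C guaranteed by the local collision free condition with h ∈ W_i and i ∈ W_h. -/

import Mathlib

variable {V : Type*} {m : ℕ}

def ImS (S : Set (Fin m → V)) (C : Set (Fin m)) : Set V :=
  {v | ∃ i ∈ C, ∃ x ∈ S, x i = v}

def Stage (S : Set (Fin m → V)) (C : Set (Fin m)) (W : Fin m → Set (Fin m)) :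
    ℕ → Set V
  | 0 => (ImS S C)ᶜ
  | n + 1 => Stage S C W n ∪
      {v | ∃ i ∈ C, ∃ x ∈ S, x i = v ∧ ∀ j ∈ W i, x j ∈ Stage S C W n}

def SInf (S : Set (Fin m → V)) (C : Set (Fin m)) (W : Fin m → Set (Fin m)) : Set V :=
  ⋃ n, Stage S C W n

def precS (S : Set (Fin m → V)) (C : Set (Fin m)) (W : Fin m → Set (Fin m))
    (v w : V) : Prop :=
  ∃ a b : ℕ, a < b ∧
    v ∈ Stage S C W a ∧ (∀ k < a, v ∉ Stage S C W k) ∧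
    w ∈ Stage S C W b ∧ (∀ k < b, w ∉ Stage S C W k)

/-- The rules of principal `p` arising from the locally collision free set `S`. -/
def ruleOf (S : Set (Fin m → V)) (C D : Set (Fin m)) (W : Fin m → Set (Fin m))
    (X : Set V) (v : V) : Prop :=
  ∃ i ∈ C ∪ D, ∃ x ∈ S, v = x i ∧ X = {u | ∃ j ∈ W i, x j = u}

/-- The rule `X → x` is decomposing: some `v ∈ X` with `x ≺ v` controls `x`, i.e.
`x` belongs to every composing rule producing `v`. -/
def decomposingRule (S : Set (Fin m → V)) (C D : Set (Fin m))
    (W : Fin m → Set (Fin m)) (X : Set V) (x : V) : Prop :=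
  ∃ v ∈ X, precS S C W x v ∧
    ∀ X' : Set V, ruleOf S C D W X' v → (∀ u ∈ X', precS S C W u v) → x ∈ X'

/-- `v controls x`. -/
def controls (S : Set (Fin m → V)) (C D : Set (Fin m)) (W : Fin m → Set (Fin m))
    (v x : V) : Prop :=
  precS S C W x v ∧
    ∀ X' : Set V, ruleOf S C D W X' v → (∀ u ∈ X', precS S C W u v) → x ∈ X'

/-!
A value first appears in stage `n + 1` only through some tuple whose inputs all lie in stage `n`;
by condition (2) every other tuple producing it from an index of `C` has the same inputs, so the
inputs of a composing rule for a value of `Im(S)` strictly precede it. For `i ∈ D` the index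
`h ∈ C` with `h ∈ W i`, `i ∈ W h` then gives `x i ≺ x h`, while a rule from `D` can never be
composing (its input `x h` would have to precede `x i` as well). Hence the only composing rules for
`x h` come from `C`, and by (2) they all contain `x i`. Conversely, for `i ∈ C` every input precedes
`x i`, so none can be preceded by it.
-/

section Stages

variable {S : Set (Fin m → V)} {C D : Set (Fin m)} {W : Fin m → Set (Fin m)}

def IsFirstStage (S : Set (Fin m → V)) (C : Set (Fin m)) (W : Fin m → Set (Fin m))
    (v : V) (a : ℕ) : Prop :=
  v ∈ Stage S C W a ∧ ∀ k < a, v ∉ Stage S C W k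

lemma precS_iff {v w : V} :
    precS S C W v w ↔ ∃ a b, a < b ∧ IsFirstStage S C W v a ∧ IsFirstStage S C W w b := by
  simp only [precS, IsFirstStage, and_assoc]

lemma IsFirstStage.unique {v : V} {a b : ℕ} (ha : IsFirstStage S C W v a)
    (hb : IsFirstStage S C W v b) : a = b := by
  by_contra hne
  rcases Nat.lt_or_gt_of_ne hne with h | h
  · exact hb.2 a h ha.1
  · exact ha.2 b h hb.1

lemma exists_isFirstStage {v : V} {n : ℕ} (hv : v ∈ Stage S C W n) :
    ∃ a ≤ n, IsFirstStage S C W v a := by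
  classical
  have hex : ∃ k, v ∈ Stage S C W k := ⟨n, hv⟩
  exact ⟨Nat.find hex, Nat.find_min' hex hv, Nat.find_spec hex, fun _ => Nat.find_min hex⟩

lemma precS_of_mem_stage {v w : V} {k b : ℕ} (hv : v ∈ Stage S C W k)
    (hw : IsFirstStage S C W w b) (hkb : k < b) : precS S C W v w := by
  obtain ⟨a, hak, ha⟩ := exists_isFirstStage hv
  exact precS_iff.2 ⟨a, b, hak.trans_lt hkb, ha, hw⟩

lemma mem_sInf_of_precS {v w : V} (h : precS S C W v w) : v ∈ SInf S C W := by
  obtain ⟨a, -, -, ha, -⟩ := precS_iff.1 h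
  exact Set.mem_iUnion.2 ⟨a, ha.1⟩

lemma precS_asymm {v w : V} (hvw : precS S C W v w) : ¬ precS S C W w v := by
  rw [precS_iff] at hvw ⊢
  rintro ⟨b', a', hba', hw', hv'⟩
  obtain ⟨a, b, hab, hv, hw⟩ := hvw
  rw [hv.unique hv', hw.unique hw'] at hab
  omega

/-- Stage `0` is the complement of `Im(S)`. -/
lemma exists_tuple_of_isFirstStage {t : Fin m} (ht : t ∈ C) {y : Fin m → V} (hy : y ∈ S)
    {b : ℕ} (hb : IsFirstStage S C W (y t) b) :
    ∃ n, b = n + 1 ∧ ∃ t' ∈ C, ∃ z ∈ S, z t' = y t ∧ ∀ j ∈ W t', z j ∈ Stage S C W n := by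
  obtain ⟨hmem, hmin⟩ := hb
  cases b with
  | zero => exact absurd ⟨t, ht, y, hy, rfl⟩ hmem
  | succ n =>
    refine ⟨n, rfl, ?_⟩
    rcases hmem with hn | hnew
    · exact absurd hn (hmin n n.lt_succ_self)
    · exact hnew

lemma precS_input_of_mem_C
    (hLCF2 : ∀ i ∈ C, ∀ t ∈ C, ∀ x ∈ S, ∀ y ∈ S, x i = y t → x '' (W i) = y '' (W t))
    {t : Fin m} (ht : t ∈ C) {y : Fin m → V} (hy : y ∈ S) (hyt : y t ∈ SInf S C W)
    {j : Fin m} (hj : j ∈ W t) : precS S C W (y j) (y t) := by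
  obtain ⟨k, hk⟩ := Set.mem_iUnion.1 hyt
  obtain ⟨b, -, hb⟩ := exists_isFirstStage hk
  obtain ⟨n, rfl, t', ht', z, hz, hzt, hinputs⟩ := exists_tuple_of_isFirstStage ht hy hb
  obtain ⟨j', hj', hzj⟩ : y j ∈ z '' W t' :=
    hLCF2 t ht t' ht' y hy z hz hzt.symm ▸ Set.mem_image_of_mem y hj
  exact precS_of_mem_stage (hzj ▸ hinputs j' hj') hb n.lt_succ_self

lemma not_forall_precS_input_of_mem_D (hLCF1 : ∀ i ∈ D, ∃ h ∈ C, h ∈ W i ∧ i ∈ W h)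
    (hLCF2 : ∀ i ∈ C, ∀ t ∈ C, ∀ x ∈ S, ∀ y ∈ S, x i = y t → x '' (W i) = y '' (W t))
    {t : Fin m} (ht : t ∈ D) {y : Fin m → V} (hy : y ∈ S) :
    ¬ ∀ j ∈ W t, precS S C W (y j) (y t) := by
  intro hall
  obtain ⟨h, hC, hhW, htW⟩ := hLCF1 t ht
  have hpre := hall h hhW
  exact precS_asymm hpre (precS_input_of_mem_C hLCF2 hC hy (mem_sInf_of_precS hpre) htW)

lemma mem_of_ruleOf_of_mem_C (hLCF1 : ∀ i ∈ D, ∃ h ∈ C, h ∈ W i ∧ i ∈ W h)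
    (hLCF2 : ∀ i ∈ C, ∀ t ∈ C, ∀ x ∈ S, ∀ y ∈ S, x i = y t → x '' (W i) = y '' (W t))
    {h : Fin m} (hC : h ∈ C) {x : Fin m → V} (hx : x ∈ S) {k : Fin m} (hk : k ∈ W h)
    {X' : Set V} (hX' : ruleOf S C D W X' (x h)) (hcomp : ∀ u ∈ X', precS S C W u (x h)) :
    x k ∈ X' := by
  obtain ⟨t, htC | htD, y, hy, hxy, rfl⟩ := hX'
  · exact (hLCF2 h hC t htC x hx y hy hxy ▸ Set.mem_image_of_mem x hk : x k ∈ y '' W t)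
  · exact absurd (fun j hj => hxy ▸ hcomp (y j) ⟨j, hj, rfl⟩)
      (not_forall_precS_input_of_mem_D hLCF1 hLCF2 htD hy)

end Stages

theorem decomposing_characterization_general
    (S : Set (Fin m → V)) (C D : Set (Fin m)) (W : Fin m → Set (Fin m))
    (hLCF1 : ∀ i ∈ D, ∃ h ∈ C, h ∈ W i ∧ i ∈ W h)
    (hLCF2 : ∀ i ∈ C, ∀ t ∈ C, ∀ x ∈ S, ∀ y ∈ S,
      x i = y t → x '' (W i) = y '' (W t))
    (i : Fin m) (hi : i ∈ C ∪ D) (x : Fin m → V) (hx : x ∈ S)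
    (hxi : x i ∈ SInf S C W) (hW : ∀ j ∈ W i, x j ∈ SInf S C W) :
    (decomposingRule S C D W {u | ∃ j ∈ W i, x j = u} (x i) ↔ i ∈ D) ∧
    (i ∈ D → ∃ h, h ∈ C ∧ h ∈ W i ∧ i ∈ W h ∧ controls S C D W (x h) (x i)) := by
  have hcontrol (hiD : i ∈ D) :
      ∃ h, h ∈ C ∧ h ∈ W i ∧ i ∈ W h ∧ controls S C D W (x h) (x i) := by
    obtain ⟨h, hC, hhW, hiW⟩ := hLCF1 i hiD
    exact ⟨h, hC, hhW, hiW, precS_input_of_mem_C hLCF2 hC hx (hW h hhW) hiW,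
      fun _ hX' hcomp => mem_of_ruleOf_of_mem_C hLCF1 hLCF2 hC hx hiW hX' hcomp⟩
  refine ⟨⟨fun hdec => ?_, fun hiD => ?_⟩, hcontrol⟩
  · rcases hi with hiC | hiD
    · obtain ⟨-, ⟨j, hj, rfl⟩, hpre, -⟩ := hdec
      exact absurd hpre (precS_asymm (precS_input_of_mem_C hLCF2 hiC hx hxi hj))
    · exact hiD
  · obtain ⟨h, -, hhW, -, hpre, hctl⟩ := hcontrol hiD
    exact ⟨x h, ⟨h, hhW, rfl⟩, hpre, hctl⟩

theorem decomposing_characterization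
    (S : Set (Fin m → V)) (C D : Set (Fin m)) (W : Fin m → Set (Fin m))
    (hLCF1 : ∀ i ∈ D, ∃ h ∈ C, h ∈ W i ∧ i ∈ W h)
    (hLCF2 : ∀ i ∈ C, ∀ t ∈ C, ∀ x ∈ S, ∀ y ∈ S,
      x i = y t → x '' (W i) = y '' (W t))
    (hCD : Disjoint C D)
    (i : Fin m) (hi : i ∈ C ∪ D) (x : Fin m → V) (hx : x ∈ S)
    (hxi : x i ∈ SInf S C W) (hW : ∀ j ∈ W i, x j ∈ SInf S C W) :
    (decomposingRule S C D W {u | ∃ j ∈ W i, x j = u} (x i) ↔ i ∈ D) ∧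
    (i ∈ D → ∃ h, h ∈ C ∧ h ∈ W i ∧ i ∈ W h ∧ controls S C D W (x h) (x i)) :=
  decomposing_characterization_general S C D W hLCF1 hLCF2 i hi x hx hxi hW
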